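/- In the earliest-start (ASAP) schedule of the tiled FlatTree algorithm (with TT kernels) on a p × q tiled matrix with p > q > 1, for every pair (i,k) with 2 ≤ k ≤ q and k < i ≤ p, the task TTQRT(i, k, k) zeroing tile (i,k) completes exactly at time 6i + 16k − 22. -/

import Mathlib

/-!
Lower bound: an explicit path of weight `6i + 16k - 22` ends at `TTQRT(i, k, k)`. It runs down
column 1 through the serialized updates `TTMQR(r, 1, 1, 2)`, `r = 2, …, i`, then along row `i`
through `GEQRT`, `UNMQR`, `TTMQR` of the columns `2, …, k - 1`, and ends with `GEQRT(i, k)`.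
Upper bound: the closed-form earliest-start times of all tasks form a feasible schedule (every
task completes at least its weight after each of its predecessors), and a feasible schedule
bounds the weight of every path ending at a task.
-/

namespace TiledQR

/-- An elimination `elim(i, piv, k)`: tile `(i, k)` is zeroed out by an orthogonal
transformation combining row `i` with pivot row `piv`. -/
structure Elim where
  i : ℕ
  piv : ℕ
  k : ℕ
deriving DecidableEq

/-- `Before L e f` : the elimination `e` occurs strictly before `f` in the list `L`. -/
def Before (L : List Elim) (e f : Elim) : Prop :=
  ∃ a b : Fin L.length, (a : ℕ) < b ∧ L.get a = e ∧ L.get b = f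

/-- `L` is a valid elimination list for a `p × q` tiled matrix: it contains exactly one
elimination for every sub-diagonal tile `(i, k)` (`1 ≤ k ≤ min p q`, `k < i ≤ p`);
every elimination `elim(i, piv, k)` comes after all eliminations `elim(i, *, k')` and
`elim(piv, *, k')` with `k' < k`, and before the elimination `elim(piv, *, k)` of its
pivot row. -/
def ValidElimList (p q : ℕ) (L : List Elim) : Prop :=
  L.Nodup ∧
  (∀ e ∈ L, 1 ≤ e.k ∧ e.k ≤ min p q ∧ e.k < e.i ∧ e.i ≤ p ∧
      1 ≤ e.piv ∧ e.piv ≤ p ∧ e.piv ≠ e.i) ∧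
  (∀ i k, 1 ≤ k → k ≤ min p q → k < i → i ≤ p → ∃! piv, Elim.mk i piv k ∈ L) ∧
  (∀ a b : Fin L.length, (L.get b).k < (L.get a).k →
      ((L.get b).i = (L.get a).i ∨ (L.get b).i = (L.get a).piv) → (b : ℕ) < a) ∧
  (∀ a b : Fin L.length, (L.get b).k = (L.get a).k →
      (L.get b).i = (L.get a).piv → (a : ℕ) < b)

/-- The tasks of the tiled QR factorization with TT (triangle-on-top-of-triangle)
kernels. -/
inductive Task where
  | GEQRT (r k : ℕ)
  | UNMQR (r k j : ℕ)
  | TTQRT (i piv k : ℕ)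
  | TTMQR (i piv k j : ℕ)
deriving DecidableEq

/-- Weights of the TT kernels, the unit being `n_b ^ 3 / 3` flops. -/
def weight : Task → ℕ
  | .GEQRT _ _ => 4
  | .UNMQR _ _ _ => 6
  | .TTQRT _ _ _ => 2
  | .TTMQR _ _ _ _ => 6

/-- The tasks associated with a `p × q` tiled matrix and an elimination list `L`:
a factorization `GEQRT(r, k)` and updates `UNMQR(r, k, j)` (`k < j ≤ q`) for every tile
`(r, k)` with `k ≤ r ≤ p`, and, for every elimination `elim(i, piv, k)` of `L`, a task
`TTQRT(i, piv, k)` and updates `TTMQR(i, piv, k, j)` for `k < j ≤ q`. -/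
def InTasks (p q : ℕ) (L : List Elim) : Task → Prop
  | .GEQRT r k => 1 ≤ k ∧ k ≤ min p q ∧ k ≤ r ∧ r ≤ p
  | .UNMQR r k j => 1 ≤ k ∧ k ≤ min p q ∧ k ≤ r ∧ r ≤ p ∧ k < j ∧ j ≤ q
  | .TTQRT i piv k => Elim.mk i piv k ∈ L
  | .TTMQR i piv k j => Elim.mk i piv k ∈ L ∧ k < j ∧ j ≤ q

/-- The precedence (dependence) relation between the TT tasks.  Besides the flow
dependencies of the kernels, two tasks reading and writing a common tile
(a pivot tile reused by several eliminations of a column, or a pivot tile that is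
subsequently zeroed out) are serialized in the order of the elimination list. -/
inductive Prec (L : List Elim) : Task → Task → Prop
  | geqrt_unmqr (r k j : ℕ) :
      Prec L (.GEQRT r k) (.UNMQR r k j)
  | geqrt_ttqrt_row (i piv k : ℕ) :
      Prec L (.GEQRT i k) (.TTQRT i piv k)
  | geqrt_ttqrt_piv (i piv k : ℕ) :
      Prec L (.GEQRT piv k) (.TTQRT i piv k)
  | ttqrt_ttmqr (i piv k j : ℕ) :
      Prec L (.TTQRT i piv k) (.TTMQR i piv k j)
  | unmqr_ttmqr_row (i piv k j : ℕ) :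
      Prec L (.UNMQR i k j) (.TTMQR i piv k j)
  | unmqr_ttmqr_piv (i piv k j : ℕ) :
      Prec L (.UNMQR piv k j) (.TTMQR i piv k j)
  | ttmqr_geqrt (a b i k : ℕ) : 2 ≤ k → (a = i ∨ b = i) →
      Prec L (.TTMQR a b (k - 1) k) (.GEQRT i k)
  | ttqrt_serial (i i' piv k : ℕ) :
      Before L (Elim.mk i piv k) (Elim.mk i' piv k) →
      Prec L (.TTQRT i piv k) (.TTQRT i' piv k)
  | ttmqr_serial (i i' piv k j : ℕ) :
      Before L (Elim.mk i piv k) (Elim.mk i' piv k) →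
      Prec L (.TTMQR i piv k j) (.TTMQR i' piv k j)
  | ttqrt_pivot_use (a i piv k : ℕ) :
      Prec L (.TTQRT a i k) (.TTQRT i piv k)
  | ttmqr_pivot_use (a i piv k j : ℕ) :
      Prec L (.TTMQR a i k j) (.TTMQR i piv k j)

/-- A path in the weighted task DAG. -/
def IsPath (p q : ℕ) (L : List Elim) (path : List Task) : Prop :=
  (∀ t ∈ path, InTasks p q L t) ∧ path.Chain' (Prec L)

/-- The critical path length of the tiled algorithm given by the elimination list `L`:
the maximum total weight of a path in the weighted task DAG (equivalently, the makespan
of the earliest-start schedule with unboundedly many processors). -/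
noncomputable def cpLength (p q : ℕ) (L : List Elim) : ℕ :=
  sSup { w : ℕ | ∃ path : List Task, IsPath p q L path ∧ w = (path.map weight).sum }
/-- The FlatTree (Sameh-Kuck) elimination list: all eliminations of column `k` use the
diagonal row `k` as pivot; eliminations are listed column by column and, within a
column, by increasing row index. -/
def flatTreeList (p q : ℕ) : List Elim :=
  (List.range' 1 (min p q)).flatMap fun k =>
    (List.range' (k + 1) (p - k)).map fun i => Elim.mk i k k
/-- The completion time of task `t` in the earliest-start (ASAP) schedule with
unboundedly many processors: the maximum total weight of a path ending at `t`. -/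
noncomputable def finishTime (p q : ℕ) (L : List Elim) (t : Task) : ℕ :=
  sSup { w : ℕ | ∃ path : List Task, IsPath p q L path ∧ path.getLast? = some t ∧
      w = (path.map weight).sum }

def Elim.colRow (e : Elim) : ℕ ×ₗ ℕ := toLex (e.k, e.i)

theorem before_iff_of_pairwise {α : Type*} [Preorder α] (key : Elim → α) {L : List Elim}
    (hL : L.Pairwise (fun e f => key e < key f)) {e f : Elim} :
    Before L e f ↔ e ∈ L ∧ f ∈ L ∧ key e < key f := by
  constructor
  · rintro ⟨a, b, hab, rfl, rfl⟩
    exact ⟨List.get_mem _ _, List.get_mem _ _, hL.rel_get_of_lt hab⟩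
  · rintro ⟨he, hf, hlt⟩
    obtain ⟨a, rfl⟩ := List.mem_iff_get.1 he
    obtain ⟨b, rfl⟩ := List.mem_iff_get.1 hf
    refine ⟨a, b, ?_, rfl, rfl⟩
    by_contra! hba
    rcases (Fin.le_iff_val_le_val.2 hba).lt_or_eq with hba | rfl
    · exact lt_asymm hlt (hL.rel_get_of_lt hba)
    · exact lt_irrefl _ hlt

theorem mem_flatTreeList {p q i piv k : ℕ} :
    Elim.mk i piv k ∈ flatTreeList p q ↔
      piv = k ∧ 1 ≤ k ∧ k ≤ min p q ∧ k < i ∧ i ≤ p := by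
  simp only [flatTreeList, List.mem_flatMap, List.mem_map, List.mem_range'_1, Elim.mk.injEq]
  constructor
  · rintro ⟨k, hk, i, hi, rfl, rfl, rfl⟩
    omega
  · rintro ⟨rfl, h⟩
    exact ⟨piv, by omega, i, by omega, rfl, rfl, rfl⟩

theorem pairwise_flatTreeList (p q : ℕ) :
    (flatTreeList p q).Pairwise (fun e f => e.colRow < f.colRow) := by
  simp only [flatTreeList, List.pairwise_flatMap, List.pairwise_map, List.mem_map,
    Elim.colRow, Prod.Lex.toLex_lt_toLex, true_and]
  refine ⟨fun k _ => (List.pairwise_lt_range' ..).imp Or.inr, ?_⟩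
  refine (List.pairwise_lt_range' ..).imp fun hkk' => ?_
  rintro _ ⟨i, -, rfl⟩ _ ⟨i', -, rfl⟩
  exact Or.inl hkk'

theorem before_flatTreeList_iff {p q : ℕ} {e f : Elim} :
    Before (flatTreeList p q) e f ↔
      e ∈ flatTreeList p q ∧ f ∈ flatTreeList p q ∧ e.colRow < f.colRow :=
  before_iff_of_pairwise _ (pairwise_flatTreeList p q)

def PathWeight (p q : ℕ) (L : List Elim) (t : Task) (w : ℕ) : Prop :=
  ∃ path : List Task, IsPath p q L path ∧ path.getLast? = some t ∧ w = (path.map weight).sum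

def IsFeasibleSchedule (p q : ℕ) (L : List Elim) (φ : Task → ℕ) : Prop :=
  (∀ t, InTasks p q L t → weight t ≤ φ t) ∧
    ∀ s t, InTasks p q L s → InTasks p q L t → Prec L s t → φ s + weight t ≤ φ t

section PathWeight

variable {p q : ℕ} {L : List Elim}

theorem PathWeight.single {t : Task} (ht : InTasks p q L t) : PathWeight p q L t (weight t) :=
  ⟨[t], ⟨by simpa using ht, List.isChain_singleton t⟩, rfl, by simp⟩

theorem PathWeight.snoc {s t : Task} {w : ℕ} (hs : PathWeight p q L s w)
    (ht : InTasks p q L t) (hst : Prec L s t) : PathWeight p q L t (w + weight t) := by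
  obtain ⟨path, ⟨hmem, hchain⟩, hlast, rfl⟩ := hs
  refine ⟨path ++ [t], ⟨?_, ?_⟩, List.getLast?_concat, by simp⟩
  · simpa [or_imp, forall_and] using ⟨hmem, ht⟩
  · refine hchain.append (List.isChain_singleton t) ?_
    simp_all

theorem PathWeight.le {φ : Task → ℕ} (hφ : IsFeasibleSchedule p q L φ) {t : Task} {w : ℕ}
    (h : PathWeight p q L t w) : w ≤ φ t := by
  obtain ⟨path, hpath, hlast, rfl⟩ := h
  induction path using List.reverseRecOn generalizing t with
  | nil => simp at hlast
  | append_singleton path x ih =>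
    obtain rfl : x = t := by simpa using hlast
    obtain ⟨hmem, hchain⟩ := hpath
    simp only [List.map_append, List.sum_append, List.map_singleton, List.sum_singleton]
    rcases hs : path.getLast? with _ | s
    · obtain rfl : path = [] := List.getLast?_eq_none_iff.1 hs
      simpa using hφ.1 x (hmem x (by simp))
    · have hsx : Prec L s x := (List.isChain_append.1 hchain).2.2 s hs x rfl
      have hsmem : s ∈ path := List.mem_of_getLast? hs
      have := ih ⟨fun y hy => hmem y (by simp [hy]), hchain.left_of_append⟩ hs
      have := hφ.2 s x (hmem s (by simp [hsmem])) (hmem x (by simp)) hsx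
      omega

theorem finishTime_eq_of_isFeasibleSchedule {φ : Task → ℕ} (hφ : IsFeasibleSchedule p q L φ)
    {t : Task} (ht : PathWeight p q L t (φ t)) : finishTime p q L t = φ t :=
  IsGreatest.csSup_eq ⟨ht, fun _ hw => PathWeight.le hφ hw⟩

end PathWeight

/-- The completion times of all FlatTree tasks in the earliest-start schedule. -/
def flatTreeTime : Task → ℕ
  | .GEQRT r k => if k ≤ 1 then 4 else 6 * r + 16 * k - 24
  | .UNMQR r k _ => if k ≤ 1 then 10 else 6 * r + 16 * k - 18
  | .TTQRT i _ k => if k ≤ 1 then 2 * i + 2 else 6 * i + 16 * k - 22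
  | .TTMQR i _ k _ => 6 * i + 16 * k - 12

theorem isFeasibleSchedule_flatTreeTime (p q : ℕ) :
    IsFeasibleSchedule p q (flatTreeList p q) flatTreeTime := by
  refine ⟨fun t ht => ?_, fun s t hs ht hst => ?_⟩
  · cases t <;> simp only [InTasks, mem_flatTreeList, weight, flatTreeTime] at ht ⊢ <;>
      (try split_ifs) <;> omega
  · cases hst <;>
      simp only [InTasks, mem_flatTreeList, before_flatTreeList_iff, Elim.colRow,
        Prod.Lex.toLex_lt_toLex, weight, flatTreeTime] at * <;>
      (try split_ifs) <;> omega

section CriticalPath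

variable {p q : ℕ}

theorem pathWeight_flatTree_ttmqr_col_one {j r : ℕ} (hj : 1 < j) (hjq : j ≤ q) (hr : 2 ≤ r)
    (hrp : r ≤ p) : PathWeight p q (flatTreeList p q) (.TTMQR r 1 1 j) (6 * r + 4) := by
  induction r, hr using Nat.le_induction with
  | base =>
    exact ((PathWeight.single (t := .GEQRT 2 1) (by simp only [InTasks]; omega)).snoc
      (t := .UNMQR 2 1 j) (by simp only [InTasks]; omega) (.geqrt_unmqr 2 1 j)).snoc
      (by simp only [InTasks, mem_flatTreeList, true_and]; omega) (.unmqr_ttmqr_row 2 1 1 j)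
  | succ r hr ih =>
    have hrr : Before (flatTreeList p q) ⟨r, 1, 1⟩ ⟨r + 1, 1, 1⟩ := by
      simp only [before_flatTreeList_iff, mem_flatTreeList, Elim.colRow,
        Prod.Lex.toLex_lt_toLex, true_and]
      omega
    exact (ih (by omega)).snoc (by simp only [InTasks, mem_flatTreeList, true_and]; omega)
      (.ttmqr_serial r (r + 1) 1 1 j hrr)

theorem pathWeight_flatTree_geqrt {i c : ℕ} (hc : 2 ≤ c) (hcq : c ≤ q) (hci : c ≤ i)
    (hip : i ≤ p) :
    PathWeight p q (flatTreeList p q) (.GEQRT i c) (6 * i + 16 * c - 24) := by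
  induction c, hc using Nat.le_induction with
  | base =>
    convert (pathWeight_flatTree_ttmqr_col_one one_lt_two hcq hci hip).snoc
      (by simp only [InTasks]; omega) (.ttmqr_geqrt i 1 i 2 le_rfl (.inl rfl)) using 1
    simp only [weight]; omega
  | succ c hc ih =>
    have hcol := ((ih (by omega) (by omega)).snoc (t := .UNMQR i c (c + 1))
      (by simp only [InTasks]; omega) (.geqrt_unmqr i c (c + 1))).snoc
      (t := .TTMQR i c c (c + 1)) (by simp only [InTasks, mem_flatTreeList, true_and]; omega)
      (.unmqr_ttmqr_row i c c (c + 1))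
    convert hcol.snoc (by simp only [InTasks]; omega)
      (.ttmqr_geqrt i c i (c + 1) (by omega) (.inl rfl)) using 1
    simp only [weight]; omega

end CriticalPath

theorem flatTree_ttqrt_finishTime_general (p q i k : ℕ)
    (hk2 : 2 ≤ k) (hkq : k ≤ q) (hki : k < i) (hip : i ≤ p) :
    finishTime p q (flatTreeList p q) (Task.TTQRT i k k) = 6 * i + 16 * k - 22 := by
  have htime : flatTreeTime (.TTQRT i k k) = 6 * i + 16 * k - 22 := if_neg (by omega)
  have hpath : PathWeight p q (flatTreeList p q) (.TTQRT i k k) (6 * i + 16 * k - 22) := by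
    convert (pathWeight_flatTree_geqrt hk2 hkq hki.le hip).snoc (t := .TTQRT i k k)
      (mem_flatTreeList.2 ⟨rfl, by omega, by omega, hki, hip⟩) (.geqrt_ttqrt_row i k k) using 1
    simp only [weight]; omega
  rw [finishTime_eq_of_isFeasibleSchedule (isFeasibleSchedule_flatTreeTime p q) (htime ▸ hpath),
    htime]

/-- In the earliest-start schedule of the tiled FlatTree algorithm (TT kernels) on a
`p × q` matrix with `p > q > 1`, tile `(i, k)` (for `2 ≤ k ≤ q` and `k < i ≤ p`) is
zeroed out, i.e. the task `TTQRT(i, k, k)` completes, exactly at time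
`6i + 16k - 22`. -/
theorem flatTree_ttqrt_finishTime (p q i k : ℕ) (hq : 1 < q) (hpq : q < p)
    (hk2 : 2 ≤ k) (hkq : k ≤ q) (hki : k < i) (hip : i ≤ p) :
    finishTime p q (flatTreeList p q) (Task.TTQRT i k k) = 6 * i + 16 * k - 22 :=
  flatTree_ttqrt_finishTime_general p q i k hk2 hkq hki hip

end TiledQR
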